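/- Let H be a hypergraph with no isolated vertices, V(H) = {1,…,n}, let D = {1,…,|D|} be a cover of H, and let ≺ : γ_1 ≺ … ≺ γ_m be the linear order on the facets of NC(H) in which γ ≺ γ' iff the complement of γ is lexicographically smaller than the complement of γ'. Then for every τ ∈ NC(H) and every vertex v ∈ τ ∖ D, if v appears in M(τ, ≺), then v is a neighbour of some vertex in (V(H)∖τ) ∩ D; consequently the vertices of τ ∖ D appearing in M(τ, ≺) are contained in N((V(H)∖τ) ∩ D). -/

import Mathlib

/-- A hypergraph: a finite vertex set `V` together with a finite family `E` of
subsets of `V` (the edges). -/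
structure FinHypergraph where
  V : Finset ℕ
  E : Finset (Finset ℕ)
  edge_subset : ∀ e ∈ E, e ⊆ V

namespace FinHypergraph

/-- The set of neighbours of `v`: all vertices `w` such that some edge contains
both `v` and `w`. -/
def nbhd (H : FinHypergraph) (v : ℕ) : Finset ℕ :=
  H.V.filter fun w => ∃ e ∈ H.E, v ∈ e ∧ w ∈ e

/-- `N(S) = ⋃ v ∈ S, N(v)`. -/
def nbhdSet (H : FinHypergraph) (S : Finset ℕ) : Finset ℕ :=
  S.biUnion H.nbhd

/-- `H` has no isolated vertex: every vertex has a neighbour. -/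
def NoIsolatedVertex (H : FinHypergraph) : Prop :=
  ∀ v ∈ H.V, (H.nbhd v).Nonempty

/-- `B` is a cover of `H` if it meets every edge. -/
def IsCover (H : FinHypergraph) (B : Finset ℕ) : Prop :=
  B ⊆ H.V ∧ ∀ e ∈ H.E, (e ∩ B).Nonempty

instance (H : FinHypergraph) (B : Finset ℕ) : Decidable (H.IsCover B) :=
  inferInstanceAs (Decidable (_ ∧ _))

/-- `A` is independent if it contains no edge. -/
def IsIndependent (H : FinHypergraph) (A : Finset ℕ) : Prop :=
  A ⊆ H.V ∧ ∀ e ∈ H.E, ¬ e ⊆ A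

/-- `W ⊆ V ∖ A` is a dominating set of `A` if `A ⊆ N(W)`. -/
def IsDominatingSet (H : FinHypergraph) (A W : Finset ℕ) : Prop :=
  W ⊆ H.V \ A ∧ A ⊆ H.nbhdSet W

/-- The domination number `γ_A(H)` of a set `A`: the minimum size of a
dominating set of `A`. -/
noncomputable def domNumber (H : FinHypergraph) (A : Finset ℕ) : ℕ :=
  sInf {n | ∃ W, H.IsDominatingSet A W ∧ W.card = n}

/-- The independence domination number
`γ_i(H) = max {γ_I(H) : I independent}`. -/
noncomputable def indepDomNumber (H : FinHypergraph) : ℕ :=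
  sSup {n | ∃ I, H.IsIndependent I ∧ H.domNumber I = n}

end FinHypergraph
/-- A finite abstract simplicial complex on vertex set `ℕ`: a finite family of
finite sets (faces) closed under taking subsets. -/
structure SComplex where
  faces : Finset (Finset ℕ)
  down_closed : ∀ ⦃σ⦄, σ ∈ faces → ∀ ⦃τ⦄, τ ⊆ σ → τ ∈ faces

namespace SComplex

/-- The vertex set of a simplicial complex. -/
def vertices (X : SComplex) : Finset ℕ := X.faces.sup id

/-- `σ` is a maximal face (facet) of `X`. -/
def IsMaximalFace (X : SComplex) (σ : Finset ℕ) : Prop :=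
  σ ∈ X.faces ∧ ∀ τ ∈ X.faces, σ ⊆ τ → τ = σ

/-- `(γ, σ)` is a free pair: `σ` is the unique maximal face containing `γ`. -/
def IsFreePair (X : SComplex) (γ σ : Finset ℕ) : Prop :=
  γ ∈ X.faces ∧ X.IsMaximalFace σ ∧ γ ⊆ σ ∧
    ∀ τ, X.IsMaximalFace τ → γ ⊆ τ → τ = σ

/-- The empty complex. -/
def empty : SComplex := ⟨∅, by intro σ h; simp at h⟩

/-- An elementary `d`-collapse from `X` to `Y`: there is a free pair `(γ, σ)`
with `|γ| ≤ d`, and `Y` is obtained from `X` by removing all faces `τ` with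
`γ ⊆ τ ⊆ σ`. -/
def ElemCollapse (d : ℕ) (X Y : SComplex) : Prop :=
  ∃ γ σ, X.IsFreePair γ σ ∧ γ.card ≤ d ∧
    Y.faces = X.faces.filter fun τ => ¬ (γ ⊆ τ ∧ τ ⊆ σ)

/-- `X` is `d`-collapsible: some finite sequence of elementary `d`-collapses
reduces `X` to the empty complex. -/
def Collapsible (d : ℕ) (X : SComplex) : Prop :=
  Relation.ReflTransGen (ElemCollapse d) X SComplex.empty

/-- The collapsibility number `C(X)`: the least `d` such that `X` is
`d`-collapsible. -/
noncomputable def collapsibility (X : SComplex) : ℕ :=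
  sInf {d | X.Collapsible d}

/-- The link of a face `σ`. -/
def link (X : SComplex) (σ : Finset ℕ) : SComplex where
  faces := X.faces.filter fun τ => σ ∩ τ = ∅ ∧ σ ∪ τ ∈ X.faces
  down_closed := by
    intro τ hτ ρ hρ
    simp only [Finset.mem_filter] at hτ ⊢
    have h1 : σ ∩ ρ ⊆ σ ∩ τ := Finset.inter_subset_inter (le_refl σ) hρ
    rw [hτ.2.1] at h1
    exact ⟨X.down_closed hτ.1 hρ, Finset.subset_empty.mp h1,
      X.down_closed hτ.2.2 (Finset.union_subset_union (le_refl σ) hρ)⟩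

/-- The deletion of a face `σ`. -/
def del (X : SComplex) (σ : Finset ℕ) : SComplex where
  faces := X.faces.filter fun τ => ¬ σ ⊆ τ
  down_closed := by
    intro τ hτ ρ hρ
    simp only [Finset.mem_filter] at hτ ⊢
    exact ⟨X.down_closed hτ.1 hρ, fun hc => hτ.2 (hc.trans hρ)⟩

/-- The induced subcomplex `X[A]` on a set `A` of vertices. -/
def induced (X : SComplex) (A : Finset ℕ) : SComplex where
  faces := X.faces.filter fun τ => τ ⊆ A
  down_closed := by
    intro τ hτ ρ hρ
    simp only [Finset.mem_filter] at hτ ⊢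
    exact ⟨X.down_closed hτ.1 hρ, hρ.trans hτ.2⟩

end SComplex
/-- The non-cover complex `NC(H)` of a hypergraph `H`: its faces are the
subsets of `V(H)` that are not covers of `H`. -/
def nonCoverComplex (H : FinHypergraph) : SComplex where
  faces := H.V.powerset.filter fun A => ¬ H.IsCover A
  down_closed := by
    intro σ hσ τ hτ
    simp only [Finset.mem_filter, Finset.mem_powerset] at hσ ⊢
    refine ⟨hτ.trans hσ.1, fun hc => hσ.2 ⟨hσ.1, fun e he => ?_⟩⟩
    obtain ⟨x, hx⟩ := hc.2 e he
    rw [Finset.mem_inter] at hx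
    exact ⟨x, Finset.mem_inter.mpr ⟨hx.1, hτ hx.2⟩⟩
/-- Auxiliary recursion for the minimal exclusion sequence: `prev` is the set
of entries produced so far, and the list argument is the remaining part of the
ordered list of maximal faces. -/
def mesAux (γ : Finset ℕ) : List (Finset ℕ) → Finset ℕ → List ℕ
  | [], _ => []
  | f :: fs, prev =>
    if hf : γ ⊆ f then []
    else
      let v :=
        if hp : (prev ∩ (γ \ f)).Nonempty then (prev ∩ (γ \ f)).min' hp
        else (γ \ f).min' (Finset.sdiff_nonempty.mpr hf)
      v :: mesAux γ fs (insert v prev)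

/-- The minimal exclusion sequence `mes(γ, ≺)`, where the linear order `≺` on
the maximal faces is given by the list `L = [γ₁, …, γₘ]`. -/
def mes (γ : Finset ℕ) (L : List (Finset ℕ)) : List ℕ := mesAux γ L ∅

/-- `M(γ, ≺)`: the set of vertices appearing in `mes(γ, ≺)`. -/
def mesSet (γ : Finset ℕ) (L : List (Finset ℕ)) : Finset ℕ := (mes γ L).toFinset

/-- `d(X, ≺) = max_{γ ∈ X} |M(γ, ≺)|`. -/
def dOrder (X : SComplex) (L : List (Finset ℕ)) : ℕ :=
  X.faces.sup fun γ => (mesSet γ L).card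

/-- `L` is a linear ordering of the maximal faces of `X`: it enumerates each
maximal face exactly once. -/
def IsFacetOrder (X : SComplex) (L : List (Finset ℕ)) : Prop :=
  L.Nodup ∧ ∀ σ, σ ∈ L ↔ X.IsMaximalFace σ

/-- The list of elements of a finite set of naturals in decreasing order. -/
def descList (A : Finset ℕ) : List ℕ := (A.sort (· ≤ ·)).reverse

/-- `A <_L B`: the lexicographic order on finite sets of naturals, the sets
being listed in decreasing order of their vertices. -/
def lexLt (A B : Finset ℕ) : Prop :=
  List.Lex (· < ·) (descList A) (descList B)

/-- `L` is the linear order `≺` on the facets of `NC(H)` in which `γ ≺ γ'` iff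
the complement of `γ` is lexicographically smaller than the complement of
`γ'`. -/
def IsNCLexFacetOrder (H : FinHypergraph) (L : List (Finset ℕ)) : Prop :=
  IsFacetOrder (nonCoverComplex H) L ∧
    L.Pairwise fun a b => lexLt (H.V \ a) (H.V \ b)

/- Every entry of `mes(γ, ≺)` is the minimum of `γ ∖ γⱼ` for some facet `γⱼ`, and the complement
of a facet of `NC(H)` is an edge `e`. So an entry `v ∉ D` is the least vertex of `γ ∩ e`. Since `D`
covers `H`, some `w ∈ e ∩ D` exists, and `w < v` because `D` is an initial segment of the positive
integers; hence `w ∉ γ`, and `v, w ∈ e` are neighbours. -/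

theorem mem_or_isLeast_of_mem_mesAux {γ : Finset ℕ} {L : List (Finset ℕ)} {prev : Finset ℕ}
    {v : ℕ} (hv : v ∈ mesAux γ L prev) : v ∈ prev ∨ ∃ f ∈ L, IsLeast (↑(γ \ f) : Set ℕ) v := by
  induction L generalizing prev with
  | nil => simp [mesAux] at hv
  | cons f fs ih =>
    by_cases hf : γ ⊆ f
    · simp [mesAux, hf] at hv
    · rw [mesAux, dif_neg hf] at hv
      dsimp only at hv
      set v₀ := if hp : (prev ∩ (γ \ f)).Nonempty then (prev ∩ (γ \ f)).min' hp
        else (γ \ f).min' (Finset.sdiff_nonempty.mpr hf)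
      have hv₀ : v₀ ∈ prev ∨ IsLeast (↑(γ \ f) : Set ℕ) v₀ := by
        by_cases hp : (prev ∩ (γ \ f)).Nonempty
        · simp only [v₀, dif_pos hp]
          exact .inl (Finset.mem_inter.mp (Finset.min'_mem _ hp)).1
        · simp only [v₀, dif_neg hp]
          exact .inr (Finset.isLeast_min' _ _)
      have head : v₀ ∈ prev ∨ ∃ f' ∈ f :: fs, IsLeast (↑(γ \ f') : Set ℕ) v₀ :=
        hv₀.imp_right fun h => ⟨f, List.mem_cons_self, h⟩
      rcases List.mem_cons.mp hv with rfl | htl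
      · exact head
      · rcases ih htl with hprev | ⟨g, hg, hleast⟩
        · rcases Finset.mem_insert.mp hprev with rfl | hprev
          · exact head
          · exact .inl hprev
        · exact .inr ⟨g, List.mem_cons_of_mem _ hg, hleast⟩

theorem exists_isLeast_of_mem_mesSet {γ : Finset ℕ} {L : List (Finset ℕ)} {v : ℕ}
    (hv : v ∈ mesSet γ L) : ∃ f ∈ L, IsLeast (↑(γ \ f) : Set ℕ) v :=
  (mem_or_isLeast_of_mem_mesAux (List.mem_toFinset.mp hv)).resolve_left (Finset.notMem_empty v)

namespace FinHypergraph

variable (H : FinHypergraph)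

theorem mem_nonCoverComplex_faces {A : Finset ℕ} :
    A ∈ (nonCoverComplex H).faces ↔ A ⊆ H.V ∧ ∃ e ∈ H.E, Disjoint e A := by
  simp only [nonCoverComplex, IsCover, Finset.mem_filter, Finset.mem_powerset,
    ← Finset.not_disjoint_iff_nonempty_inter]
  push Not
  exact and_congr_right fun hA => ⟨fun h => h hA, fun h _ => h⟩

theorem sdiff_mem_E_of_isMaximalFace {f : Finset ℕ}
    (hf : (nonCoverComplex H).IsMaximalFace f) : H.V \ f ∈ H.E := by
  obtain ⟨hfV, e, he, hdisj⟩ := (H.mem_nonCoverComplex_faces).mp hf.1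
  have heV : e ⊆ H.V := H.edge_subset e he
  suffices H.V \ f = e from this ▸ he
  refine Finset.Subset.antisymm (fun x hx => ?_) (Finset.subset_sdiff.mpr ⟨heV, hdisj⟩)
  by_contra hxe
  obtain ⟨hxV, hxf⟩ := Finset.mem_sdiff.mp hx
  have hface : insert x f ∈ (nonCoverComplex H).faces :=
    (H.mem_nonCoverComplex_faces).mpr
      ⟨Finset.insert_subset hxV hfV, e, he, Finset.disjoint_insert_right.mpr ⟨hxe, hdisj⟩⟩
  exact hxf (hf.2 _ hface (Finset.subset_insert x f) ▸ Finset.mem_insert_self x f)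

theorem exists_edge_isLeast_of_mem_mesSet {L : List (Finset ℕ)}
    (hL : IsFacetOrder (nonCoverComplex H) L) {γ : Finset ℕ} (hγ : γ ⊆ H.V) {v : ℕ}
    (hv : v ∈ mesSet γ L) : ∃ e ∈ H.E, IsLeast (↑(γ ∩ e) : Set ℕ) v := by
  obtain ⟨f, hfL, hleast⟩ := exists_isLeast_of_mem_mesSet hv
  refine ⟨H.V \ f, H.sdiff_mem_E_of_isMaximalFace ((hL.2 f).mp hfL), ?_⟩
  rwa [← Finset.inter_sdiff_assoc, Finset.inter_eq_left.mpr hγ]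

theorem exists_mem_cover_sdiff_of_isLeast {D : Finset ℕ} (hcov : H.IsCover D) {γ e : Finset ℕ}
    (he : e ∈ H.E) {v : ℕ} (hv : IsLeast (↑(γ ∩ e) : Set ℕ) v) (hDv : ∀ d ∈ D, d < v) :
    ∃ w ∈ (H.V \ γ) ∩ D, v ∈ H.nbhd w := by
  obtain ⟨w, hw⟩ := hcov.2 e he
  obtain ⟨hwe, hwD⟩ := Finset.mem_inter.mp hw
  have hve : v ∈ e := (Finset.mem_inter.mp hv.1).2
  have hwγ : w ∉ γ := fun hwγ =>
    (hDv w hwD).not_ge (hv.2 (Finset.mem_coe.mpr (Finset.mem_inter.mpr ⟨hwγ, hwe⟩)))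
  refine ⟨w, Finset.mem_inter.mpr ⟨Finset.mem_sdiff.mpr ⟨H.edge_subset e he hwe, hwγ⟩, hwD⟩, ?_⟩
  exact Finset.mem_filter.mpr ⟨H.edge_subset e he hve, e, he, hwe, hve⟩

end FinHypergraph

theorem mes_vertices_outside_cover_dominated_general (H : FinHypergraph) (n : ℕ)
    (hV : H.V = Finset.Icc 1 n)
    (D : Finset ℕ) (hcov : H.IsCover D) (hD : D = Finset.Icc 1 D.card)
    (L : List (Finset ℕ)) (hL : IsNCLexFacetOrder H L)
    (τ : Finset ℕ) (hτ : τ ∈ (nonCoverComplex H).faces) :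
    (∀ v ∈ τ, v ∉ D → v ∈ mesSet τ L →
        ∃ w ∈ (H.V \ τ) ∩ D, v ∈ H.nbhd w) ∧
      (τ \ D) ∩ mesSet τ L ⊆ H.nbhdSet ((H.V \ τ) ∩ D) := by
  have hτV : τ ⊆ H.V := ((H.mem_nonCoverComplex_faces).mp hτ).1
  have dominated : ∀ v ∈ τ, v ∉ D → v ∈ mesSet τ L → ∃ w ∈ (H.V \ τ) ∩ D, v ∈ H.nbhd w := by
    intro v hvτ hvD hvM
    obtain ⟨e, he, hleast⟩ := H.exists_edge_isLeast_of_mem_mesSet hL.1 hτV hvM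
    have hv1 : 1 ≤ v := (Finset.mem_Icc.mp (hV ▸ hτV hvτ)).1
    have hDv : ∀ d ∈ D, d < v := fun d hd => by
      rw [hD, Finset.mem_Icc] at hd hvD
      omega
    exact H.exists_mem_cover_sdiff_of_isLeast hcov he hleast hDv
  refine ⟨dominated, fun v hv => ?_⟩
  rw [Finset.mem_inter, Finset.mem_sdiff] at hv
  obtain ⟨⟨hvτ, hvD⟩, hvM⟩ := hv
  obtain ⟨w, hw, hvw⟩ := dominated v hvτ hvD hvM
  exact Finset.mem_biUnion.mpr ⟨w, hw, hvw⟩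

/-- Let `H` be a hypergraph with no isolated vertices,
`V(H) = {1, …, n}`, let `D = {1, …, |D|}` be a cover of `H`, and let `≺` (given
by the list `L`) be the lexicographic-on-complements linear order on the facets
of `NC(H)`. Then for every `τ ∈ NC(H)` and every `v ∈ τ ∖ D` appearing in
`M(τ, ≺)`, `v` is a neighbour of some vertex of `(V∖τ) ∩ D`; consequently the
vertices of `τ ∖ D` appearing in `M(τ, ≺)` are contained in `N((V∖τ) ∩ D)`. -/
theorem mes_vertices_outside_cover_dominated (H : FinHypergraph) (n : ℕ)
    (hiso : H.NoIsolatedVertex) (hV : H.V = Finset.Icc 1 n)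
    (D : Finset ℕ) (hcov : H.IsCover D) (hD : D = Finset.Icc 1 D.card)
    (L : List (Finset ℕ)) (hL : IsNCLexFacetOrder H L)
    (τ : Finset ℕ) (hτ : τ ∈ (nonCoverComplex H).faces) :
    (∀ v ∈ τ, v ∉ D → v ∈ mesSet τ L →
        ∃ w ∈ (H.V \ τ) ∩ D, v ∈ H.nbhd w) ∧
      (τ \ D) ∩ mesSet τ L ⊆ H.nbhdSet ((H.V \ τ) ∩ D) :=
  mes_vertices_outside_cover_dominated_general H n hV D hcov hD L hL τ hτ
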